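/- arXiv:math/0601580 — 2 statements merged into one kernel-verified Lean document; each statement's English description precedes it below -/
import Mathlib

section
/- Let p be a prime and q a prime different from p, with p odd. Let V be a nonzero finite-dimensional vector space over ℚ_p and ρ a homomorphism from the additive group ℤ_p of p-adic integers to the group of ℚ_p-linear automorphisms of V, such that V is the direct sum of one-dimensional subspaces each of which is invariant under ρ(x) for every x ∈ ℤ_p. Suppose there exists a ℚ_p-linear automorphism F of V satisfying F ∘ ρ(x) ∘ F⁻¹ = ρ(q·x) for all x ∈ ℤ_p. Then ρ(x) is the identity of V for every x ∈ ℤ_p. -/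
open Finset DirectSum

/-- In `ℤ_[p]` with `p` an odd prime, the only `p`-th root of unity is `1`. -/
lemma padic_pth_root_one (p : ℕ) [hp : Fact p.Prime] (hodd : Odd p) (z : ℤ_[p])
    (hz : z ^ p = 1) : z = 1 := by
  by_contra hne
  have hp2 : 2 ≤ p := hp.out.two_le
  have hp3 : 3 ≤ p := by
    rcases Nat.lt_or_ge p 3 with h | h
    · have hp2' : p = 2 := by omega
      rw [hp2'] at hodd
      exact absurd hodd (by decide)
    · exact h
  set v : ℤ_[p] := z - 1 with hvdef
  have hv0 : v ≠ 0 := sub_ne_zero.mpr hne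
  have hvpos : 0 < ‖v‖ := norm_pos_iff.mpr hv0
  have hppos : (0 : ℝ) < (p : ℝ)⁻¹ := by positivity
  have hpinv_lt : (p : ℝ)⁻¹ < 1 := by
    rw [inv_lt_one_iff₀]
    right
    exact_mod_cast lt_of_lt_of_le one_lt_two hp2
  -- z ≡ 1 mod p hence ‖v‖ ≤ p⁻¹
  have hdvd : (p : ℤ_[p]) ∣ v := by
    have h1 : (PadicInt.toZMod z) = 1 := by
      have := congrArg (PadicInt.toZMod (p := p)) hz
      rwa [map_pow, map_one, ZMod.pow_card] at this
    have h2 : PadicInt.toZMod v = 0 := by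
      rw [hvdef, map_sub, h1, map_one, sub_self]
    have hker : v ∈ RingHom.ker (PadicInt.toZMod : ℤ_[p] →+* ZMod p) := h2
    rw [PadicInt.ker_toZMod, PadicInt.maximalIdeal_eq_span_p,
      Ideal.mem_span_singleton] at hker
    exact hker
  have hvle : ‖v‖ ≤ (p : ℝ)⁻¹ := by
    obtain ⟨w, hw⟩ := hdvd
    calc ‖v‖ = ‖(p : ℤ_[p])‖ * ‖w‖ := by rw [hw, norm_mul]
    _ ≤ (p : ℝ)⁻¹ * 1 := by
        rw [PadicInt.norm_p]
        exact mul_le_mul_of_nonneg_left (PadicInt.norm_le_one w) (le_of_lt hppos)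
    _ = (p : ℝ)⁻¹ := mul_one _
  have hvle1 : ‖v‖ ≤ 1 := hvle.trans (le_of_lt hpinv_lt)
  -- binomial expansion
  have hzv : z = v + 1 := by rw [hvdef]; ring
  have hexp : z ^ p = ∑ k ∈ range (p + 1), v ^ k * (p.choose k : ℤ_[p]) := by
    rw [hzv, add_pow]
    refine Finset.sum_congr rfl fun k _ => ?_
    rw [one_pow, mul_one]
  have hsplit : range (p + 1) = insert 0 (insert 1 (Ico 2 (p + 1))) := by
    ext k
    simp only [mem_range, mem_insert, mem_Ico]
    omega
  set S : ℤ_[p] := ∑ k ∈ Ico 2 (p + 1), v ^ k * (p.choose k : ℤ_[p]) with hSdef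
  have hsum : z ^ p = 1 + v * (p : ℤ_[p]) + S := by
    rw [hexp, hsplit, Finset.sum_insert (by simp), Finset.sum_insert (by simp)]
    simp only [pow_zero, Nat.choose_zero_right, Nat.cast_one, mul_one, pow_one,
      Nat.choose_one_right]
    ring
  have hvpS : v * (p : ℤ_[p]) = -S := by
    have : (0 : ℤ_[p]) = v * (p : ℤ_[p]) + S := by
      have := hsum
      rw [hz] at this
      linear_combination this
    linear_combination -this
  -- bound each term of S
  have hterm : ∀ k ∈ Ico 2 (p + 1),
      ‖v ^ k * (p.choose k : ℤ_[p])‖ ≤ ‖v‖ * (p : ℝ)⁻¹ * (p : ℝ)⁻¹ := by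
    intro k hk
    rw [mem_Ico] at hk
    obtain ⟨hk2, hkp⟩ := hk
    rw [norm_mul, norm_pow]
    rcases Nat.lt_or_ge k p with h | h
    · -- 2 ≤ k < p : p ∣ choose, ‖v‖^k ≤ ‖v‖ * p⁻¹
      have hchoose : (p : ℤ_[p]) ∣ (p.choose k : ℤ_[p]) := by
        obtain ⟨m, hm⟩ := hp.out.dvd_choose_self (by omega) h
        exact ⟨(m : ℤ_[p]), by rw [hm]; push_cast; ring⟩
      have hcle : ‖(p.choose k : ℤ_[p])‖ ≤ (p : ℝ)⁻¹ := by
        obtain ⟨w, hw⟩ := hchoose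
        calc ‖(p.choose k : ℤ_[p])‖ = ‖(p : ℤ_[p])‖ * ‖w‖ := by rw [hw, norm_mul]
        _ ≤ (p : ℝ)⁻¹ * 1 := by
            rw [PadicInt.norm_p]
            exact mul_le_mul_of_nonneg_left (PadicInt.norm_le_one w) (le_of_lt hppos)
        _ = (p : ℝ)⁻¹ := mul_one _
      calc ‖v‖ ^ k * ‖(p.choose k : ℤ_[p])‖
          ≤ ‖v‖ ^ 2 * (p : ℝ)⁻¹ := by
            apply mul_le_mul (pow_le_pow_of_le_one (norm_nonneg v) hvle1 hk2) hcle
              (norm_nonneg _) (by positivity)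
        _ ≤ (‖v‖ * (p : ℝ)⁻¹) * (p : ℝ)⁻¹ := by
            apply mul_le_mul_of_nonneg_right _ (le_of_lt hppos)
            rw [pow_two]
            exact mul_le_mul_of_nonneg_left hvle (norm_nonneg v)
        _ = ‖v‖ * (p : ℝ)⁻¹ * (p : ℝ)⁻¹ := rfl
    · -- k = p
      have hkeq : k = p := by omega
      calc ‖v‖ ^ k * ‖(p.choose k : ℤ_[p])‖
          ≤ ‖v‖ ^ 3 * 1 := by
            apply mul_le_mul (pow_le_pow_of_le_one (norm_nonneg v) hvle1 (by omega))
              (PadicInt.norm_le_one _) (norm_nonneg _) (by positivity)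
        _ = ‖v‖ * ‖v‖ * ‖v‖ := by ring
        _ ≤ ‖v‖ * (p : ℝ)⁻¹ * (p : ℝ)⁻¹ := by
            apply mul_le_mul (mul_le_mul_of_nonneg_left hvle (norm_nonneg v)) hvle
              (norm_nonneg v) (by positivity)
  have hSle : ‖S‖ ≤ ‖v‖ * (p : ℝ)⁻¹ * (p : ℝ)⁻¹ := by
    apply IsUltrametricDist.norm_sum_le_of_forall_le_of_nonneg (by positivity) hterm
  have hvp : ‖v * (p : ℤ_[p])‖ = ‖v‖ * (p : ℝ)⁻¹ := by
    rw [norm_mul, PadicInt.norm_p]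
  have hfin : ‖v‖ * (p : ℝ)⁻¹ ≤ ‖v‖ * (p : ℝ)⁻¹ * (p : ℝ)⁻¹ := by
    have h2 : ‖v * (p : ℤ_[p])‖ ≤ ‖v‖ * (p : ℝ)⁻¹ * (p : ℝ)⁻¹ := by
      rw [hvpS, norm_neg]; exact hSle
    rwa [hvp] at h2
  nlinarith [mul_pos hvpos hppos]

/-- In `ℤ_[p]` with `p` an odd prime, the only `p ^ s`-th roots of unity is `1`. -/
lemma padic_p_pow_root_one (p : ℕ) [hp : Fact p.Prime] (hodd : Odd p) (s : ℕ) (z : ℤ_[p])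
    (hz : z ^ p ^ s = 1) : z = 1 := by
  induction s with
  | zero => simpa using hz
  | succ n ih =>
    apply ih
    apply padic_pth_root_one p hodd
    rw [← pow_mul, ← pow_succ]
    exact hz

/-- In `ℚ_[p]` with `p` an odd prime, the only `p ^ s`-th root of unity is `1`. -/
lemma padic_p_pow_root_one_rat (p : ℕ) [hp : Fact p.Prime] (hodd : Odd p) (s : ℕ) (c : ℚ_[p])
    (hc : c ^ p ^ s = 1) : c = 1 := by
  have hps : p ^ s ≠ 0 := pow_ne_zero s hp.out.pos.ne'
  have hnorm : ‖c‖ = 1 := by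
    have h : ‖c‖ ^ (p ^ s) = 1 := by
      rw [← norm_pow, hc, norm_one]
    rcases lt_trichotomy ‖c‖ 1 with hlt | heq | hgt
    · exact absurd h (by nlinarith [pow_lt_one₀ (norm_nonneg c) hlt hps])
    · exact heq
    · exact absurd h (by nlinarith [one_lt_pow₀ hgt hps])
  set z : ℤ_[p] := ⟨c, le_of_eq hnorm⟩ with hzdef
  have hz : z ^ p ^ s = 1 := by
    apply Subtype.ext
    push_cast
    exact hc
  have := padic_p_pow_root_one p hodd s z hz
  have : (z : ℚ_[p]) = 1 := by rw [this]; rfl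
  exact this

/-- Let `p` and `q` be distinct primes with `p` odd, `V` a nonzero finite-dimensional
`ℚ_p`-vector space, and `ρ` a homomorphism from the additive group `ℤ_p` to the group of
`ℚ_p`-linear automorphisms of `V` such that `V` is an internal direct sum of one-dimensional
subspaces each invariant under every `ρ x`. If there is an automorphism `F` of `V` with
`F ∘ ρ(x) ∘ F⁻¹ = ρ(q·x)` for all `x`, then `ρ` is trivial. -/
theorem simultaneously_diagonalizable_frobenius_twist_trivial
    (p q : ℕ) [Fact p.Prime] [Fact q.Prime] (hpq : p ≠ q) (hodd : Odd p)
    (V : Type*) [AddCommGroup V] [Module ℚ_[p] V]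
    [FiniteDimensional ℚ_[p] V] [Nontrivial V]
    (ρ : ℤ_[p] → (V ≃ₗ[ℚ_[p]] V))
    (hρ : ∀ x y : ℤ_[p], ρ (x + y) = ρ x * ρ y)
    (hdiag : ∃ (ι : Type) (_ : DecidableEq ι) (W : ι → Submodule ℚ_[p] V),
      DirectSum.IsInternal W ∧
      (∀ i, Module.finrank ℚ_[p] (W i) = 1) ∧
      (∀ i, ∀ x : ℤ_[p], ∀ v ∈ W i, ρ x v ∈ W i))
    (F : V ≃ₗ[ℚ_[p]] V)
    (hF : ∀ x : ℤ_[p], F * ρ x * F⁻¹ = ρ ((q : ℤ_[p]) * x)) :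
    ∀ x : ℤ_[p], ρ x = 1 := by
  obtain ⟨ι, hdec, W, hint, hrk, hinv⟩ := hdiag
  classical
  have hp : Fact p.Prime := inferInstance
  have hq : Fact q.Prime := inferInstance
  -- the submodules are nonzero, hence the index type is finite
  have hne : ∀ i, W i ≠ ⊥ := by
    intro i h
    have := hrk i
    rw [h] at this
    simp [finrank_bot] at this
  haveI : Fintype {i // W i ≠ ⊥} :=
    hint.submodule_iSupIndep.fintypeNeBotOfFiniteDimensional
  haveI : Finite ι :=
    Finite.of_injective (fun i => (⟨i, hne i⟩ : {i // W i ≠ ⊥}))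
      (fun a b h => congrArg Subtype.val h)
  -- choose a generator of each line
  have hgen : ∀ i, ∃ v ∈ W i, v ≠ (0 : V) := fun i => (Submodule.ne_bot_iff _).mp (hne i)
  choose v hv hv0 using hgen
  have hspan : ∀ i, W i = Submodule.span ℚ_[p] {v i} := by
    intro i
    have hle : Submodule.span ℚ_[p] {v i} ≤ W i :=
      Submodule.span_le.mpr (by simp [hv i])
    exact (Submodule.eq_of_le_of_finrank_le hle
      (by rw [hrk i, finrank_span_singleton (hv0 i)])).symm
  -- the characters
  have hmem : ∀ i x, ρ x (v i) ∈ Submodule.span ℚ_[p] {v i} :=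
    fun i x => (hspan i) ▸ hinv i x (v i) (hv i)
  choose χ hχ using fun i x => Submodule.mem_span_singleton.mp (hmem i x)
  -- hχ : ∀ i x, χ i x • v i = ρ x (v i)
  have hinj : ∀ i, Function.Injective (fun c : ℚ_[p] => c • v i) :=
    fun i => smul_left_injective ℚ_[p] (hv0 i)
  have h0 : ρ 0 = 1 := by
    have h := hρ 0 0
    rw [add_zero] at h
    exact (mul_left_cancel (a := ρ 0) (by rw [mul_one, ← h])).symm
  have hone : ∀ i, χ i 0 = 1 := by
    intro i
    apply hinj i
    show χ i 0 • v i = (1 : ℚ_[p]) • v i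
    rw [hχ i 0, h0, one_smul]
    rfl
  have hmul : ∀ i x y, χ i (x + y) = χ i x * χ i y := by
    intro i x y
    apply hinj i
    show χ i (x + y) • v i = (χ i x * χ i y) • v i
    rw [hχ i (x + y), hρ]
    show ρ x (ρ y (v i)) = _
    rw [← hχ i y, map_smul, ← hχ i x, mul_smul, smul_comm]
  have hne0 : ∀ i x, χ i x ≠ 0 := by
    intro i x
    have h := hmul i x (-x)
    rw [add_neg_cancel, hone i] at h
    exact left_ne_zero_of_mul_eq_one h.symm
  have hχn : ∀ i (n : ℕ) x, χ i ((n : ℤ_[p]) * x) = χ i x ^ n := by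
    intro i n
    induction n with
    | zero => intro x; simp [hone i]
    | succ m ih =>
      intro x
      have : ((m + 1 : ℕ) : ℤ_[p]) * x = (m : ℤ_[p]) * x + x := by push_cast; ring
      rw [this, hmul i, ih, pow_succ]
  -- the decomposition equivalence
  set D : (⨁ i, ↥(W i)) ≃ₗ[ℚ_[p]] V :=
    LinearEquiv.ofBijective (DirectSum.coeLinearMap W) hint with hDdef
  -- component extraction commutes with invariant maps
  have hcomp : ∀ (g : V ≃ₗ[ℚ_[p]] V), (∀ k, ∀ u ∈ W k, g u ∈ W k) →
      ∀ (j : ι) (w : V), ((D.symm (g w)) j : V) = g ((D.symm w) j : V) := by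
    intro g hg j w
    have hw : w ∈ ⨆ i, W i := by rw [hint.submodule_iSup_eq_top]; trivial
    refine Submodule.iSup_induction (motive := fun w =>
      ((D.symm (g w)) j : V) = g ((D.symm w) j : V)) W hw ?_ ?_ ?_
    · intro k u hu
      by_cases h : k = j
      · subst h
        rw [hint.ofBijective_coeLinearMap_of_mem hu,
          hint.ofBijective_coeLinearMap_of_mem (hg k u hu)]
      · rw [hint.ofBijective_coeLinearMap_of_mem_ne h hu,
          hint.ofBijective_coeLinearMap_of_mem_ne h (hg k u hu)]
        simp
    · simp
    · intro a b ha hb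
      rw [map_add, map_add, map_add, DirectSum.add_apply, DirectSum.add_apply,
        Submodule.coe_add, Submodule.coe_add, map_add, ha, hb]
  -- q is invertible in ℤ_p
  have hqu : IsUnit ((q : ℕ) : ℤ_[p]) := by
    rw [PadicInt.isUnit_iff]
    refine le_antisymm (PadicInt.norm_le_one _) ?_
    by_contra hlt
    push_neg at hlt
    have hcast : ((q : ℕ) : ℤ_[p]) = ((q : ℤ) : ℤ_[p]) := by push_cast; rfl
    rw [hcast, PadicInt.norm_int_lt_one_iff_dvd] at hlt
    have : p ∣ q := Int.natCast_dvd_natCast.mp hlt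
    exact hpq ((Nat.prime_dvd_prime_iff_eq hp.out hq.out).mp this)
  obtain ⟨u, hu⟩ := hqu
  set r : ℤ_[p] := ((u⁻¹ : ℤ_[p]ˣ) : ℤ_[p]) with hrdef
  have hqr : (q : ℤ_[p]) * r = 1 := by
    rw [← hu, hrdef]
    exact_mod_cast u.mul_inv
  have hrq : r * (q : ℤ_[p]) = 1 := by rw [mul_comm]; exact hqr
  -- key step: F transports eigenlines
  have hkey : ∀ i, ∃ j, ∀ y, χ j y = χ i (r * y) := by
    intro i
    set w : V := F (v i) with hwdef
    have hw0 : w ≠ 0 := by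
      rw [hwdef]
      exact (LinearEquiv.map_ne_zero_iff F).mpr (hv0 i)
    have heig : ∀ y, ρ y w = χ i (r * y) • w := by
      intro y
      have h2 : (q : ℤ_[p]) * (r * y) = y := by rw [← mul_assoc, hqr, one_mul]
      have h1 : ρ y = F * ρ (r * y) * F⁻¹ := by rw [← h2, ← hF (r * y), h2]
      rw [h1]
      show F ((ρ (r * y)) (F.symm (F (v i)))) = _
      rw [F.symm_apply_apply, ← hχ i (r * y), map_smul]
    have hD0 : D.symm w ≠ 0 := by
      intro h
      apply hw0
      have := congrArg D h
      rwa [D.apply_symm_apply, map_zero] at this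
    have hex : ∃ j, (D.symm w) j ≠ 0 := by
      by_contra h
      push_neg at h
      exact hD0 (DFinsupp.ext h)
    obtain ⟨j, hj⟩ := hex
    refine ⟨j, fun y => ?_⟩
    set u0 : V := ((D.symm w) j : V) with hu0def
    have hu0W : u0 ∈ W j := ((D.symm w) j).2
    have hu00 : u0 ≠ 0 := fun h => hj (Subtype.ext h)
    have e1 : ρ y u0 = χ i (r * y) • u0 := by
      have h := hcomp (ρ y) (fun k u hu => hinv k y u hu) j w
      rw [heig y, map_smul] at h
      have h2 : ((χ i (r * y) • D.symm w) j : V) = χ i (r * y) • u0 := by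
        rw [DFinsupp.smul_apply]
        rfl
      rw [h2] at h
      exact h.symm
    obtain ⟨a, ha⟩ := Submodule.mem_span_singleton.mp ((hspan j) ▸ hu0W)
    have ha0 : a ≠ 0 := by
      rintro rfl
      rw [zero_smul] at ha
      exact hu00 ha.symm
    have e2 : (a * χ j y) • v j = (a * χ i (r * y)) • v j := by
      calc (a * χ j y) • v j = a • (χ j y • v j) := by rw [mul_smul]
      _ = a • (ρ y (v j)) := by rw [hχ j y]
      _ = ρ y (a • v j) := by rw [map_smul]
      _ = ρ y u0 := by rw [ha]
      _ = χ i (r * y) • u0 := e1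
      _ = χ i (r * y) • (a • v j) := by rw [ha]
      _ = (a * χ i (r * y)) • v j := by rw [mul_smul, smul_comm]
    have := hinj j e2
    exact mul_left_cancel₀ ha0 this
  choose f hf using hkey
  -- all characters are trivial
  have hchi1 : ∀ i x, χ i x = 1 := by
    intro i
    have horbit : ∀ n y, χ (f^[n] i) y = χ i (r ^ n * y) := by
      intro n
      induction n with
      | zero => intro y; simp
      | succ m ih =>
        intro y
        rw [Function.iterate_succ_apply', hf, ih, ← mul_assoc, ← pow_succ]
    have hper : ∃ k : ℕ, 0 < k ∧ ∀ y, χ i ((q : ℤ_[p]) ^ k * y) = χ i y := by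
      have hrqpow : ∀ m : ℕ, r ^ m * (q : ℤ_[p]) ^ m = 1 := by
        intro m
        rw [← mul_pow, hrq, one_pow]
      have key : ∀ m n : ℕ, m < n → (∀ y, χ i (r ^ m * y) = χ i (r ^ n * y)) →
          ∃ k : ℕ, 0 < k ∧ ∀ y, χ i ((q : ℤ_[p]) ^ k * y) = χ i y := by
        intro m n hmn hmneq
        refine ⟨n - m, by omega, fun y => ?_⟩
        have h1 := hmneq ((q : ℤ_[p]) ^ n * y)
        have h2 : r ^ m * ((q : ℤ_[p]) ^ n * y) = (q : ℤ_[p]) ^ (n - m) * y := by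
          have : (q : ℤ_[p]) ^ n = (q : ℤ_[p]) ^ (n - m) * (q : ℤ_[p]) ^ m := by
            rw [← pow_add]
            congr 1
            omega
          rw [this]
          calc r ^ m * ((q : ℤ_[p]) ^ (n - m) * (q : ℤ_[p]) ^ m * y)
              = (q : ℤ_[p]) ^ (n - m) * y * (r ^ m * (q : ℤ_[p]) ^ m) := by ring
          _ = (q : ℤ_[p]) ^ (n - m) * y := by rw [hrqpow m, mul_one]
        have h3 : r ^ n * ((q : ℤ_[p]) ^ n * y) = y := by
          calc r ^ n * ((q : ℤ_[p]) ^ n * y) = (r ^ n * (q : ℤ_[p]) ^ n) * y := by ring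
          _ = y := by rw [hrqpow n, one_mul]
        rw [h2, h3] at h1
        exact h1
      obtain ⟨m, n, hmn, heqmn⟩ :=
        Finite.exists_ne_map_eq_of_infinite (fun n : ℕ => f^[n] i)
      have heqchar : ∀ y, χ i (r ^ m * y) = χ i (r ^ n * y) := by
        intro y
        rw [← horbit m y, ← horbit n y, heqmn]
      rcases hmn.lt_or_gt with h | h
      · exact key m n h heqchar
      · exact key n m h (fun y => (heqchar y).symm)
    obtain ⟨k, hk0, hk⟩ := hper
    set t : ℤ_[p] := (q : ℤ_[p]) ^ k - 1 with htdef
    have ht1 : ∀ y, χ i (t * y) = 1 := by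
      intro y
      have h1 : (q : ℤ_[p]) ^ k * y = t * y + y := by rw [htdef]; ring
      have h := hk y
      rw [h1, hmul i] at h
      have := mul_right_cancel₀ (hne0 i y) (h.trans (one_mul (χ i y)).symm)
      exact this
    have ht0 : t ≠ 0 := by
      intro h
      rw [htdef, sub_eq_zero] at h
      have hcast : ((q ^ k : ℕ) : ℤ_[p]) = ((1 : ℕ) : ℤ_[p]) := by push_cast; rw [h]
      have := Nat.cast_injective (R := ℤ_[p]) hcast
      have hq2 : 2 ≤ q := hq.out.two_le
      have : 2 ≤ q ^ k := le_trans hq2 (Nat.le_self_pow (by omega) q)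
      omega
    set s : ℕ := (PadicInt.valuation t) with hsdef
    have huc : t = (PadicInt.unitCoeff ht0 : ℤ_[p]) * (p : ℤ_[p]) ^ s :=
      PadicInt.unitCoeff_spec ht0
    have hucinv : (PadicInt.unitCoeff ht0 : ℤ_[p]) *
        ((PadicInt.unitCoeff ht0)⁻¹ : ℤ_[p]ˣ) = 1 := by
      exact_mod_cast (PadicInt.unitCoeff ht0).mul_inv
    have hps : ∀ x, χ i ((p : ℤ_[p]) ^ s * x) = 1 := by
      intro x
      have heq : (p : ℤ_[p]) ^ s * x =
          t * ((((PadicInt.unitCoeff ht0)⁻¹ : ℤ_[p]ˣ) : ℤ_[p]) * x) := by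
        linear_combination (-((((PadicInt.unitCoeff ht0)⁻¹ : ℤ_[p]ˣ) : ℤ_[p]) * x)) * huc
          - ((p : ℤ_[p]) ^ s * x) * hucinv
      rw [heq, ht1]
    intro x
    have hpow : χ i x ^ (p ^ s) = 1 := by
      have hcast : ((p ^ s : ℕ) : ℤ_[p]) = (p : ℤ_[p]) ^ s := by push_cast; rfl
      rw [← hχn i (p ^ s) x, hcast, hps x]
    exact padic_p_pow_root_one_rat p hodd s (χ i x) hpow
  -- conclude
  intro x
  apply LinearEquiv.toLinearMap_injective
  apply LinearMap.ext
  intro w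
  show ρ x w = (1 : V ≃ₗ[ℚ_[p]] V) w
  have hw : w ∈ ⨆ i, W i := by rw [hint.submodule_iSup_eq_top]; trivial
  refine Submodule.iSup_induction (motive := fun w => ρ x w = (1 : V ≃ₗ[ℚ_[p]] V) w) W hw ?_ ?_ ?_
  · intro k u hu
    obtain ⟨a, ha⟩ := Submodule.mem_span_singleton.mp ((hspan k) ▸ hu)
    show ρ x u = u
    rw [← ha, map_smul, ← hχ k x, hchi1 k x, one_smul]
  · simp
  · intro a b ha hb
    rw [map_add, map_add, ha, hb]
end

section
/- Let p be a prime and U a group. Let M be a cofinitely generated ℤ_p-module, i.e. a ℤ_p-module admitting an injective ℤ_p-linear map into (ℚ_p/ℤ_p)^n for some n, equipped with a ℤ_p-linear U-action, and let T ⊆ M be a finite U-stable ℤ_p-submodule. If M contains no nonzero p-divisible ℤ_p-submodule fixed elementwise by U, then the quotient M/T contains no nonzero p-divisible ℤ_p-submodule fixed elementwise by U. -/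
/-- The copy of `ℤ_p` inside `ℚ_p`, as a `ℤ_p`-submodule. -/
noncomputable def ZpInQp (p : ℕ) [Fact p.Prime] : Submodule ℤ_[p] ℚ_[p] :=
  LinearMap.range (Algebra.linearMap ℤ_[p] ℚ_[p])

/-- `ℚ_p/ℤ_p`: the quotient of (the additive group of) `ℚ_p` by the image of `ℤ_p`,
regarded as a `ℤ_p`-module. -/
abbrev QpModZp (p : ℕ) [Fact p.Prime] : Type := ℚ_[p] ⧸ ZpInQp p

/-- `M` contains no nonzero `p`-divisible `ℤ_p`-submodule fixed elementwise by `U`. -/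
def NoNonzeroDivisibleFixedSubmodule (p : ℕ) [Fact p.Prime]
    (U : Type*) [Group U] (M : Type*) [AddCommGroup M] [Module ℤ_[p] M]
    [DistribMulAction U M] : Prop :=
  ∀ D : Submodule ℤ_[p] M,
    (∀ x ∈ D, ∀ k : ℕ, 1 ≤ k → ∃ y ∈ D, ((p : ℤ_[p]) ^ k) • y = x) →
    (∀ (u : U), ∀ d ∈ D, u • d = d) →
    D = ⊥

/-- Let `p` be a prime and `U` a group. Let `M` be a cofinitely generated `ℤ_p`-module
(i.e. one admitting a `ℤ_p`-linear injection into `(ℚ_p/ℤ_p)^n` for some `n`) with a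
`ℤ_p`-linear `U`-action, and `T ⊆ M` a finite `U`-stable submodule. If `M` contains no
nonzero `p`-divisible `ℤ_p`-submodule fixed elementwise by `U`, then neither does `M/T`
(for the induced `U`-action, described via the quotient map `T.mkQ`). -/
theorem quotient_by_finite_noNonzeroDivisibleFixedSubmodule
    (p : ℕ) [Fact p.Prime] (U : Type*) [Group U]
    (M : Type*) [AddCommGroup M] [Module ℤ_[p] M]
    [DistribMulAction U M] [SMulCommClass U ℤ_[p] M]
    (hcofin : ∃ (n : ℕ) (ι : M →ₗ[ℤ_[p]] (Fin n → QpModZp p)), Function.Injective ι)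
    (T : Submodule ℤ_[p] M)
    (hTfin : (T : Set M).Finite)
    (hTstable : ∀ (u : U), ∀ t ∈ T, u • t ∈ T)
    (hM : NoNonzeroDivisibleFixedSubmodule p U M) :
    ∀ D : Submodule ℤ_[p] (M ⧸ T),
      (∀ x ∈ D, ∀ k : ℕ, 1 ≤ k → ∃ y ∈ D, ((p : ℤ_[p]) ^ k) • y = x) →
      (∀ (u : U) (m : M), T.mkQ m ∈ D → T.mkQ (u • m) = T.mkQ m) →
      D = ⊥ := by
  classical
  intro D hdiv hfix
  -- exponent killing T
  obtain ⟨a, ha⟩ : ∃ a : ℕ, ∀ t ∈ T, ((p : ℤ_[p]) ^ a) • t = 0 := by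
    have : Finite (T : Set M) := hTfin
    set n : ℕ := Nat.card T with hn
    have hn0 : n ≠ 0 := Nat.card_ne_zero.2 ⟨⟨0, T.zero_mem⟩, inferInstance⟩
    have hnsmul : ∀ t ∈ T, (n : ℤ_[p]) • t = 0 := by
      intro t ht
      have : (n • (⟨t, ht⟩ : T) : T) = 0 := card_nsmul_eq_zero'
      have h2 : n • t = 0 := congrArg Subtype.val this
      rw [Nat.cast_smul_eq_nsmul, h2]
    have hc : ((n : ℤ_[p])) ≠ 0 := Nat.cast_ne_zero.2 hn0
    set v : ℕ := ((n : ℤ_[p])).valuation with hv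
    have hu : (n : ℤ_[p]) = (PadicInt.unitCoeff hc : ℤ_[p]) * (p : ℤ_[p]) ^ v :=
      PadicInt.unitCoeff_spec hc
    refine ⟨v, fun t ht => ?_⟩
    have : ((p : ℤ_[p]) ^ v) • t
        = (((PadicInt.unitCoeff hc)⁻¹ : ℤ_[p]ˣ) : ℤ_[p]) • ((n : ℤ_[p]) • t) := by
      rw [← mul_smul]
      congr 1
      rw [eq_comm, Units.inv_mul_eq_iff_eq_mul]
      exact hu
    rw [this, hnsmul t ht, smul_zero]
  set E' : Submodule ℤ_[p] M := D.comap T.mkQ with hE'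
  set E : ℕ → Submodule ℤ_[p] M :=
    fun k => E'.map ((LinearMap.lsmul ℤ_[p] M) ((p : ℤ_[p]) ^ k)) with hE
  have memE : ∀ k x, x ∈ E k ↔ ∃ y ∈ E', ((p : ℤ_[p]) ^ k) • y = x := by
    intro k x
    simp [hE, Submodule.mem_map]
  -- E is antitone
  have hanti : ∀ j k : ℕ, j ≤ k → E k ≤ E j := by
    intro j k hjk x hx
    rw [memE] at hx ⊢
    obtain ⟨y, hy, rfl⟩ := hx
    refine ⟨((p : ℤ_[p]) ^ (k - j)) • y, E'.smul_mem _ hy, ?_⟩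
    rw [← mul_smul, ← pow_add, Nat.add_sub_cancel' hjk]
  have hEle : ∀ k, E k ≤ E' := by
    intro k x hx
    rw [memE] at hx
    obtain ⟨y, hy, rfl⟩ := hx
    exact E'.smul_mem _ hy
  -- mkQ maps E k onto D for k ≥ 1
  have hsurj : ∀ k : ℕ, 1 ≤ k → ∀ d ∈ D, ∃ x ∈ E k, T.mkQ x = d := by
    intro k hk d hd
    obtain ⟨y, hy, hyd⟩ := hdiv d hd k hk
    obtain ⟨z, rfl⟩ := T.mkQ_surjective y
    refine ⟨((p : ℤ_[p]) ^ k) • z, (memE _ _).2 ⟨z, hy, rfl⟩, ?_⟩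
    rw [map_smul, hyd]
  -- stabilization of T ∩ E k
  set S : ℕ → Finset M := fun k => hTfin.toFinset.filter (fun t => t ∈ E k) with hS
  have hSanti : ∀ j k : ℕ, j ≤ k → S k ⊆ S j := by
    intro j k hjk x hx
    simp only [hS, Finset.mem_filter] at hx ⊢
    exact ⟨hx.1, hanti j k hjk hx.2⟩
  obtain ⟨k₀, hk₀⟩ : ∃ k₀, ∀ k, k₀ ≤ k → S k = S k₀ := by
    have hne : (Set.range fun k => (S k).card).Nonempty := ⟨(S 0).card, ⟨0, rfl⟩⟩
    obtain ⟨k₀, hk₀⟩ := Nat.sInf_mem hne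
    refine ⟨k₀, fun k hk => ?_⟩
    refine Finset.eq_of_subset_of_card_le (hSanti k₀ k hk) ?_
    have hk₀' : (S k₀).card = sInf (Set.range fun k => (S k).card) := hk₀
    rw [hk₀']
    exact Nat.sInf_le ⟨k, rfl⟩
  set K : ℕ := k₀ + 1 with hK
  have hK1 : 1 ≤ K := Nat.le_add_left 1 k₀
  have hTstab : ∀ k, K ≤ k → ∀ t ∈ T, t ∈ E K → t ∈ E k := by
    intro k hk t ht htK
    have h1 : t ∈ S K := by
      simp only [hS, Finset.mem_filter, Set.Finite.mem_toFinset]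
      exact ⟨ht, htK⟩
    have h2 : t ∈ S k := by
      rw [hk₀ k (le_trans (Nat.le_succ k₀) hk), ← hk₀ K (Nat.le_succ k₀)]
      exact h1
    simp only [hS, Finset.mem_filter] at h2
    exact h2.2
  -- E stabilizes: ∀ k ≥ K, E k = E K
  have hstab : ∀ k, K ≤ k → E k = E K := by
    intro k hk
    refine le_antisymm (hanti K k hk) ?_
    intro x hx
    have hxD : T.mkQ x ∈ D := hEle K hx
    obtain ⟨y, hy, hyx⟩ := hsurj k (le_trans hK1 hk) (T.mkQ x) hxD
    have htT : y - x ∈ T := by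
      rw [← Submodule.ker_mkQ T, LinearMap.mem_ker, map_sub, hyx, sub_self]
    have htE : y - x ∈ E K := (E K).sub_mem (hanti K k hk hy) hx
    have htk : y - x ∈ E k := hTstab k hk _ htT htE
    have : x = y - (y - x) := (sub_sub_cancel y x).symm
    rw [this]
    exact (E k).sub_mem hy htk
  -- the candidate submodule F
  set F : Submodule ℤ_[p] M := E K with hF
  have hFdiv : ∀ x ∈ F, ∀ k : ℕ, 1 ≤ k → ∃ y ∈ F, ((p : ℤ_[p]) ^ k) • y = x := by
    intro x hx k _
    have : x ∈ E (K + k) := by rw [hstab (K + k) (Nat.le_add_right K k)]; exact hx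
    rw [memE] at this
    obtain ⟨y, hy, rfl⟩ := this
    refine ⟨((p : ℤ_[p]) ^ K) • y, (memE _ _).2 ⟨y, hy, rfl⟩, ?_⟩
    rw [← mul_smul, ← pow_add, Nat.add_comm]
  have hFfix : ∀ (u : U), ∀ x ∈ F, u • x = x := by
    intro u x hx
    have : x ∈ E (K + a) := by rw [hstab (K + a) (Nat.le_add_right K a)]; exact hx
    rw [memE] at this
    obtain ⟨y, hy, rfl⟩ := this
    set w : M := ((p : ℤ_[p]) ^ K) • y with hw
    have hwE' : w ∈ E' := E'.smul_mem _ hy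
    have hxw : ((p : ℤ_[p]) ^ (K + a)) • y = ((p : ℤ_[p]) ^ a) • w := by
      rw [hw, ← mul_smul, ← pow_add, Nat.add_comm]
    have hwD' : T.mkQ w ∈ D := hwE'
    have huw : u • w - w ∈ T := by
      rw [← Submodule.ker_mkQ T, LinearMap.mem_ker, map_sub, hfix u w hwD', sub_self]
    rw [hxw, smul_comm, ← sub_add_cancel (u • w) w, smul_add, ha _ huw, zero_add]
  have hF0 : F = ⊥ := hM F hFdiv hFfix
  -- conclude D = ⊥
  refine le_antisymm ?_ bot_le
  intro d hd
  obtain ⟨x, hx, rfl⟩ := hsurj K hK1 d hd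
  have hx0 : x = 0 := by
    have hxF : x ∈ F := hx
    rw [hF0, Submodule.mem_bot] at hxF
    exact hxF
  rw [hx0, map_zero]
  exact Submodule.zero_mem ⊥
end
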